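/- Let R_x, R_y be positive semidefinite n×n matrices and R_xy an n×n matrix such that for every α > 0, the matrix R_x − R_xy (R_y + αI)^{-1} R_xy^T is positive semidefinite. Then ||R_xy||² ≤ ||R_x|| · ||R_y|| (spectral norms). -/

import Mathlib

/-!
Fix `α > 0`, put `M = Ry + α I` and let `S = M ^ (1/2)`. The matrix `C = Rxy M⁻¹ S` satisfies
`C S = Rxy` and `C Cᵀ = Rxy M⁻¹ Rxyᵀ ≤ Rx`. By the C⋆-identity and the monotonicity of the
operator norm on positive semidefinite matrices,
`‖Rxy‖² ≤ ‖C‖² ‖S‖² = ‖C Cᵀ‖ ‖Sᵀ S‖ ≤ ‖Rx‖ ‖M‖`, and `‖M‖ → ‖Ry‖` as `α → 0⁺`.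
-/

open Matrix
open scoped Matrix.Norms.L2Operator
open Filter Topology

namespace ContinuousLinearMap

variable {𝕜 E : Type*} [RCLike 𝕜] [NormedAddCommGroup E] [InnerProductSpace 𝕜 E]

theorem IsPositive.rayleighQuotient_nonneg {T : E →L[𝕜] E} (hT : T.IsPositive) (x : E) :
    0 ≤ T.rayleighQuotient x :=
  div_nonneg (hT.re_inner_nonneg_left x) (sq_nonneg _)

theorem norm_le_norm_of_nonneg_of_le {P R : E →L[𝕜] E} (hP : 0 ≤ P) (hPR : P ≤ R) :
    ‖P‖ ≤ ‖R‖ := by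
  rw [nonneg_iff_isPositive] at hP
  rw [P.norm_eq_iSup_rayleighQuotient hP.isSymmetric]
  refine ciSup_le fun x ↦ ?_
  have hRP : R.rayleighQuotient x = P.rayleighQuotient x + (R - P).rayleighQuotient x := by
    rw [← rayleighQuotient_add, add_sub_cancel]
  calc |P.rayleighQuotient x| = P.rayleighQuotient x :=
        abs_of_nonneg (hP.rayleighQuotient_nonneg x)
    _ ≤ R.rayleighQuotient x := hRP ▸ le_add_of_nonneg_right (hPR.rayleighQuotient_nonneg x)
    _ ≤ |R.rayleighQuotient x| := le_abs_self _
    _ ≤ ‖R‖ := R.rayleighQuotient_le_norm x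

end ContinuousLinearMap

namespace Matrix

open scoped MatrixOrder ComplexOrder

variable {𝕜 m n : Type*} [RCLike 𝕜] [Fintype m] [Fintype n] [DecidableEq n]

theorem toEuclideanCLM_le_toEuclideanCLM_iff {A B : Matrix n n 𝕜} :
    toEuclideanCLM (n := n) (𝕜 := 𝕜) A ≤ toEuclideanCLM (n := n) (𝕜 := 𝕜) B ↔ A ≤ B := by
  rw [ContinuousLinearMap.le_def, ← map_sub, ← ContinuousLinearMap.isPositive_toLinearMap_iff,
    coe_toEuclideanCLM_eq_toEuclideanLin, isPositive_toEuclideanLin_iff, le_iff]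

theorem l2_opNorm_le_of_nonneg_of_le {A B : Matrix n n 𝕜} (hA : 0 ≤ A) (hAB : A ≤ B) :
    ‖A‖ ≤ ‖B‖ := by
  rw [cstar_norm_def, cstar_norm_def]
  refine ContinuousLinearMap.norm_le_norm_of_nonneg_of_le ?_
    (toEuclideanCLM_le_toEuclideanCLM_iff.2 hAB)
  simpa using (toEuclideanCLM_le_toEuclideanCLM_iff (𝕜 := 𝕜)).2 hA

theorem l2_opNorm_mul_conjTranspose_self [DecidableEq m] (A : Matrix m n 𝕜) :
    ‖A * Aᴴ‖ = ‖A‖ ^ 2 := by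
  simpa [l2_opNorm_conjTranspose, sq] using l2_opNorm_conjTranspose_mul_self Aᴴ

theorem l2_opNorm_sq_le_of_mul_inv_mul_conjTranspose_le [DecidableEq m] {A : Matrix m n 𝕜}
    {M : Matrix n n 𝕜} {R : Matrix m m 𝕜} (hM : M.PosDef) (h : A * M⁻¹ * Aᴴ ≤ R) :
    ‖A‖ ^ 2 ≤ ‖R‖ * ‖M‖ := by
  set S := CFC.sqrt M
  have hS : Sᴴ = S := (CFC.sqrt_nonneg M).isSelfAdjoint
  have hSS : S * S = M := CFC.sqrt_mul_sqrt_self M hM.posSemidef.nonneg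
  have hM₁ : M⁻¹ * M = 1 := nonsing_inv_mul M ((isUnit_iff_isUnit_det M).1 hM.isUnit)
  set C := A * M⁻¹ * S with hC
  have hCS : C * S = A := by
    rw [hC, Matrix.mul_assoc, hSS, Matrix.mul_assoc, hM₁, Matrix.mul_one]
  have hCC : C * Cᴴ = A * M⁻¹ * Aᴴ := by
    simp only [C, conjTranspose_mul, hS, hM.isHermitian.inv.eq]
    rw [← Matrix.mul_assoc, ← hC, hCS, Matrix.mul_assoc]
  calc ‖A‖ ^ 2 = ‖C * S‖ ^ 2 := by rw [hCS]
    _ ≤ (‖C‖ * ‖S‖) ^ 2 := by gcongr; exact l2_opNorm_mul C S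
    _ = ‖C * Cᴴ‖ * ‖Sᴴ * S‖ := by
      rw [l2_opNorm_mul_conjTranspose_self, l2_opNorm_conjTranspose_mul_self, mul_pow, sq, sq]
    _ ≤ ‖R‖ * ‖M‖ := by
      rw [hS, hSS]
      gcongr
      exact l2_opNorm_le_of_nonneg_of_le (posSemidef_self_mul_conjTranspose C).nonneg (hCC ▸ h)

end Matrix

theorem stmt18_general {n : ℕ} (Rx Ry Rxy : Matrix (Fin n) (Fin n) ℝ)
    (hy : Ry.PosSemidef)
    (h : ∀ α : ℝ, 0 < α →
      (Rx - Rxy * (Ry + α • (1 : Matrix (Fin n) (Fin n) ℝ))⁻¹ * Rxyᵀ).PosSemidef) :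
    ‖Rxy‖ ^ 2 ≤ ‖Rx‖ * ‖Ry‖ := by
  have hbound : ∀ α : ℝ, 0 < α →
      ‖Rxy‖ ^ 2 ≤ ‖Rx‖ * ‖Ry + α • (1 : Matrix (Fin n) (Fin n) ℝ)‖ := fun α hα ↦
    l2_opNorm_sq_le_of_mul_inv_mul_conjTranspose_le (PosDef.posSemidef_add hy (PosDef.one.smul hα))
      (by rw [conjTranspose_eq_transpose_of_trivial]; exact h α hα)
  have hcont : Continuous fun α : ℝ ↦ ‖Rx‖ * ‖Ry + α • (1 : Matrix (Fin n) (Fin n) ℝ)‖ := by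
    fun_prop
  have hlim : Tendsto (fun α : ℝ ↦ ‖Rx‖ * ‖Ry + α • (1 : Matrix (Fin n) (Fin n) ℝ)‖)
      (𝓝[>] 0) (𝓝 (‖Rx‖ * ‖Ry‖)) := by
    simpa using (hcont.continuousWithinAt (s := Set.Ioi 0) (x := 0)).tendsto
  exact ge_of_tendsto hlim (eventually_nhdsWithin_of_forall hbound)

/-- Limiting step of the matrix Cauchy–Schwarz proof: if
`Rx − Rxy (Ry + αI)⁻¹ Rxyᵀ ⪰ 0` for all `α > 0`, then `‖Rxy‖² ≤ ‖Rx‖ ‖Ry‖`. -/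
theorem stmt18 {n : ℕ} (Rx Ry Rxy : Matrix (Fin n) (Fin n) ℝ)
    (hx : Rx.PosSemidef) (hy : Ry.PosSemidef)
    (h : ∀ α : ℝ, 0 < α →
      (Rx - Rxy * (Ry + α • (1 : Matrix (Fin n) (Fin n) ℝ))⁻¹ * Rxyᵀ).PosSemidef) :
    ‖Rxy‖ ^ 2 ≤ ‖Rx‖ * ‖Ry‖ :=
  stmt18_general Rx Ry Rxy hy h
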